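/- arXiv:0810.5549 — 3 statements merged into one kernel-verified Lean document; each statement's English description precedes it below -/
import Mathlib

section
/- Let ψ ∈ C^∞(U × V) be analytic in y about a point p ∈ V with Taylor expansion ψ(x,y) = ∑_s c_s(x)(y−p)^s. If all Taylor coefficient functions c_s lie in the span of k linearly independent smooth functions f_1,...,f_k on U, then ψ has rank at most k, i.e., every sample matrix (ψ(x_i,y_j)) has rank at most k. -/
/-- Let `ψ` be smooth on `U × V` and analytic in the second variable about a
point `p ∈ V`, with Taylor expansion `ψ x y = ∑_s c_s(x) (y - p)^s` over
multi-indices `s`. If all Taylor coefficient functions `c_s` lie in the span of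
`k` linearly independent smooth functions `f 1, ..., f k` on `U`, then every
sample matrix `(ψ (x i) (y j))` with points in `U` and `V` has rank at most `k`. -/
theorem stmt11 (n k : ℕ) (U V : Set (Fin n → ℝ)) (hU : IsOpen U) (hV : IsOpen V)
    (p : Fin n → ℝ) (hp : p ∈ V)
    (ψ : (Fin n → ℝ) → (Fin n → ℝ) → ℝ)
    (hψ : ContDiffOn ℝ (⊤ : ℕ∞) (fun q : (Fin n → ℝ) × (Fin n → ℝ) => ψ q.1 q.2) (U ×ˢ V))
    (c : (Fin n → ℕ) → (Fin n → ℝ) → ℝ)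
    (htaylor : ∀ x ∈ U, ∀ y ∈ V,
      HasSum (fun s : Fin n → ℕ => c s x * ∏ i, (y i - p i) ^ s i) (ψ x y))
    (f : Fin k → (Fin n → ℝ) → ℝ) (hfsmooth : ∀ j, ContDiffOn ℝ (⊤ : ℕ∞) (f j) U)
    (hfindep : LinearIndependent ℝ fun j : Fin k => U.restrict (f j))
    (hspan : ∀ s, ∃ β : Fin k → ℝ, ∀ x ∈ U, c s x = ∑ j, β j * f j x) :
    ∀ (m : ℕ) (x y : Fin m → (Fin n → ℝ)), (∀ i, x i ∈ U) → (∀ j, y j ∈ V) →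
      (Matrix.of fun i j : Fin m => ψ (x i) (y j)).rank ≤ k := by
  intro m x y hx hy
  classical
  set W : Submodule ℝ (Fin m → ℝ) :=
    Submodule.span ℝ (Set.range fun l : Fin k => fun i => f l (x i)) with hW
  have hWdim : Module.finrank ℝ W ≤ k := by
    simpa [Set.finrank] using finrank_range_le_card (R := ℝ) (fun l : Fin k => fun i => f l (x i))
  have hWclosed : IsClosed (W : Set (Fin m → ℝ)) := W.closed_of_finiteDimensional
  -- each column lies in W
  have hcol : ∀ j : Fin m, (fun i => ψ (x i) (y j)) ∈ W := by
    intro j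
    have hsum : HasSum (fun s : Fin n → ℕ =>
        (fun i : Fin m => c s (x i) * ∏ t, (y j t - p t) ^ s t)) (fun i => ψ (x i) (y j)) := by
      rw [Pi.hasSum]
      intro i
      exact htaylor (x i) (hx i) (y j) (hy j)
    refine hWclosed.mem_of_tendsto hsum (Filter.Eventually.of_forall ?_)
    intro F
    refine Submodule.sum_mem _ ?_
    intro s _
    obtain ⟨β, hβ⟩ := hspan s
    have : (fun i : Fin m => c s (x i) * ∏ t, (y j t - p t) ^ s t)
        = ∑ l : Fin k, (β l * ∏ t, (y j t - p t) ^ s t) • (fun i => f l (x i)) := by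
      funext i
      simp only [Finset.sum_apply, Pi.smul_apply, smul_eq_mul]
      rw [hβ (x i) (hx i), Finset.sum_mul]
      exact Finset.sum_congr rfl fun l _ => by ring
    rw [this]
    exact Submodule.sum_mem _ fun l _ =>
      Submodule.smul_mem _ _ (Submodule.subset_span ⟨l, rfl⟩)
  set M : Matrix (Fin m) (Fin m) ℝ := Matrix.of fun i j : Fin m => ψ (x i) (y j) with hM
  have hrange : LinearMap.range M.mulVecLin ≤ W := by
    rw [Matrix.range_mulVecLin, Submodule.span_le]
    rintro _ ⟨j, rfl⟩
    exact hcol j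
  calc M.rank = Module.finrank ℝ (LinearMap.range M.mulVecLin) := rfl
    _ ≤ Module.finrank ℝ W := Submodule.finrank_mono hrange
    _ ≤ k := hWdim
end

section
/- Let ψ ∈ C^∞(U × V) be analytic in y about p ∈ V with Taylor coefficients c_s. If ψ has finite rank k (every sample matrix has rank ≤ k, with equality attained), then the span of the Taylor coefficient functions {c_s} has dimension at most k; in particular no k+1 of the c_s are linearly independent on U. -/
open MeasureTheory Matrix

/-- One-variable power series uniqueness: if `∑ b m * t ^ m = 0` for all `t` in a
neighbourhood of `0`, then all coefficients vanish. -/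
lemma oneVar_coeff_zero (b : ℕ → ℝ) (r : ℝ) (hr : 0 < r)
    (h : ∀ t : ℝ, |t| < r → HasSum (fun m => b m * t ^ m) 0) : b = 0 := by
  set p : FormalMultilinearSeries ℝ ℝ ℝ :=
    fun m => b m • ContinuousMultilinearMap.mkPiAlgebraFin ℝ m ℝ with hp
  have happ : ∀ (m : ℕ) (t : ℝ), (p m) (fun _ => t) = b m * t ^ m := by
    intro m t
    simp [hp, ContinuousMultilinearMap.mkPiAlgebraFin_apply, List.prod_ofFn]
  have hr2 : (0:ℝ) < r / 2 := by linarith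
  have habs : |r / 2| < r := by rw [abs_of_pos hr2]; linarith
  set ρ : NNReal := ⟨r / 2, hr2.le⟩ with hρ
  have hnorm : ∀ m : ℕ, ‖p m‖ * (ρ : ℝ) ^ m ≤ |b m * (r / 2) ^ m| := by
    intro m
    have h1 : ‖p m‖ ≤ |b m| := by
      rw [hp]
      calc ‖b m • ContinuousMultilinearMap.mkPiAlgebraFin ℝ m ℝ‖
          ≤ |b m| * ‖ContinuousMultilinearMap.mkPiAlgebraFin ℝ m ℝ‖ := by
            simpa using norm_smul_le (b m) (ContinuousMultilinearMap.mkPiAlgebraFin ℝ m ℝ)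
        _ ≤ |b m| * 1 := by
            refine mul_le_mul_of_nonneg_left ?_ (abs_nonneg _)
            simpa using ContinuousMultilinearMap.norm_mkPiAlgebraFin_le (A := ℝ) (𝕜 := ℝ) (n := m)
        _ = |b m| := mul_one _
    have hcoe : (ρ : ℝ) = r / 2 := rfl
    rw [hcoe, abs_mul, abs_pow, abs_of_pos hr2]
    exact mul_le_mul_of_nonneg_right h1 (by positivity)
  have hsum : Summable (fun m => b m * (r / 2) ^ m) := (h _ habs).summable
  have htend0 : Filter.Tendsto (fun m => |b m * (r / 2) ^ m|) Filter.atTop (nhds 0) := by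
    simpa using hsum.tendsto_atTop_zero.abs
  have htend : Filter.Tendsto (fun m => ‖p m‖ * (ρ : ℝ) ^ m) Filter.atTop (nhds 0) :=
    squeeze_zero (fun m => by positivity) hnorm htend0
  have hrad : (ρ : ENNReal) ≤ p.radius := p.le_radius_of_tendsto htend
  have hball : HasFPowerSeriesOnBall (0 : ℝ → ℝ) p 0 ρ := by
    refine ⟨hrad, ?_, ?_⟩
    · exact_mod_cast (show (0:NNReal) < ρ from hr2)
    · intro y hy
      have hy' : |y| < r := by
        have h1 : (‖y‖₊ : ENNReal) < (ρ : ENNReal) := by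
          rwa [mem_emetric_ball_zero_iff] at hy
        have h2 : ‖y‖₊ < ρ := by exact_mod_cast h1
        have h3 : |y| < r / 2 := by
          have h4 := NNReal.coe_lt_coe.mpr h2
          have h5 : |y| < (ρ : ℝ) := by simpa [coe_nnnorm, Real.norm_eq_abs] using h4
          exact h5
        linarith
      simpa [happ] using h y hy'
  have hp0 : p = 0 := hball.hasFPowerSeriesAt.eq_zero
  funext m
  have h1 : (p m) (fun _ => 1) = 0 := by rw [hp0]; simp
  rw [happ m 1] at h1
  simpa using h1

lemma prod_pow_cons {n : ℕ} (u : ℝ) (t : Fin n → ℝ) (m : ℕ) (s' : Fin n → ℕ) :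
    (∏ i, Fin.cons (α := fun _ => ℝ) u t i ^ (Fin.cons (α := fun _ => ℕ) m s' i))
      = u ^ m * ∏ i, t i ^ s' i := by
  rw [Fin.prod_univ_succ]
  simp

set_option maxHeartbeats 1000000 in
/-- Multivariable power series uniqueness. -/
lemma mv_coeff_zero : ∀ (n : ℕ) (a : (Fin n → ℕ) → ℝ) (r : ℝ), 0 < r →
    (∀ y : Fin n → ℝ, (∀ i, |y i| < r) →
      HasSum (fun s : Fin n → ℕ => a s * ∏ i, y i ^ s i) 0) →
    a = 0 := by
  intro n
  induction n with
  | zero =>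
    intro a r hr h
    funext s
    have h0 := h (fun i => i.elim0) (fun i => i.elim0)
    have h1 : HasSum (fun s : Fin 0 → ℕ => a s * ∏ i, (fun i : Fin 0 => i.elim0 : Fin 0 → ℝ) i ^ s i)
        (a s * ∏ i : Fin 0, (fun i : Fin 0 => i.elim0 : Fin 0 → ℝ) i ^ s i) := by
      refine hasSum_single s (fun b hb => ?_)
      exact absurd (Subsingleton.elim b s) hb
    have := h1.unique (by simpa using h0)
    simpa using this
  | succ n ih =>
    intro a r hr h
    have hr2 : (0:ℝ) < r / 2 := by linarith
    have habs : |r / 2| < r := by rw [abs_of_pos hr2]; linarith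
    have hne : ((r:ℝ) / 2) ≠ 0 := ne_of_gt hr2
    have key : ∀ (t : Fin n → ℝ), (∀ i, |t i| < r) → ∀ m : ℕ,
        HasSum (fun s' : Fin n → ℕ => a (Fin.cons m s') * ∏ i, t i ^ s' i) 0 := by
      intro t ht
      have hSf : ∀ m : ℕ,
          Summable (fun s' : Fin n → ℕ => a (Fin.cons m s') * ∏ i, t i ^ s' i) := by
        intro m
        have hy : ∀ i, |Fin.cons (α := fun _ => ℝ) (r/2) t i| < r :=
          Fin.cases (by simpa using habs) (fun j => by simpa using ht j)
        have hs := (h _ hy).summable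
        have hs2 := hs.comp_injective (Fin.cons_right_injective (m : ℕ))
        have hpow : ((r:ℝ)/2) ^ m ≠ 0 := pow_ne_zero _ hne
        have hs3 : Summable (fun s' : Fin n → ℕ =>
            (a (Fin.cons m s') * ((r/2) ^ m * ∏ i, t i ^ s' i)) * (((r:ℝ)/2) ^ m)⁻¹) := by
          apply Summable.mul_right
          refine hs2.congr (fun s' => ?_)
          simp only [Function.comp_apply, prod_pow_cons]
        refine hs3.congr (fun s' => ?_)
        field_simp
      have hbt0 : ∀ m : ℕ,
          (∑' s' : Fin n → ℕ, a (Fin.cons m s') * ∏ i, t i ^ s' i) = 0 := by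
        have hB := oneVar_coeff_zero
          (fun m => ∑' s' : Fin n → ℕ, a (Fin.cons m s') * ∏ i, t i ^ s' i) r hr ?_
        · exact fun m => congrFun hB m
        intro u hu
        have hy : ∀ i, |Fin.cons (α := fun _ => ℝ) u t i| < r :=
          Fin.cases (by simpa using hu) (fun j => by simpa using ht j)
        have htot := h _ hy
        have htot2 : HasSum (fun ms : ℕ × (Fin n → ℕ) =>
            a (Fin.cons ms.1 ms.2) * ∏ i, Fin.cons (α := fun _ => ℝ) u t i
              ^ (Fin.cons (α := fun _ => ℕ) ms.1 ms.2 i)) 0 := by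
          have h1 := (Fin.consEquiv (fun _ : Fin (n+1) => ℕ)).hasSum_iff.mpr htot
          have hcomp : ((fun s : Fin (n+1) → ℕ => a s * ∏ i, Fin.cons u t i ^ s i)
              ∘ (Fin.consEquiv (fun _ : Fin (n+1) => ℕ)))
              = (fun ms : ℕ × (Fin n → ℕ) =>
                a (Fin.cons ms.1 ms.2) * ∏ i, Fin.cons (α := fun _ => ℝ) u t i
                  ^ (Fin.cons (α := fun _ => ℕ) ms.1 ms.2 i)) := by
            funext ms
            rfl
          rwa [hcomp] at h1
        refine htot2.prod_fiberwise (fun m => ?_)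
        have h4 := (hSf m).hasSum.mul_right (u ^ m)
        have heq : (fun s' : Fin n → ℕ =>
            (a (Fin.cons m s') * ∏ i, t i ^ s' i) * u ^ m)
            = fun s' : Fin n → ℕ =>
              a (Fin.cons m s') * ∏ i, Fin.cons (α := fun _ => ℝ) u t i
                ^ (Fin.cons (α := fun _ => ℕ) m s' i) := by
          funext s'
          rw [prod_pow_cons]
          ring
        rw [heq] at h4
        exact h4
      intro m
      have h5 := (hSf m).hasSum
      rw [hbt0 m] at h5
      exact h5
    funext s
    have h6 : (fun s' : Fin n → ℕ => a (Fin.cons (s 0) s')) = 0 := by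
      refine ih _ r hr (fun t ht => key t ht (s 0))
    have h7 := congrFun h6 (Fin.tail s)
    simpa [Fin.cons_self_tail] using h7

/-- From a set whose span has dimension at least `N`, extract `N` linearly
independent elements. -/
lemma exists_mem_indep {N : ℕ} {E : Type*} [AddCommGroup E] [Module ℝ E]
    [FiniteDimensional ℝ E] (S : Set E)
    (hN : N ≤ Module.finrank ℝ (Submodule.span ℝ S)) :
    ∃ g : Fin N → E, (∀ j, g j ∈ S) ∧ LinearIndependent ℝ g := by
  classical
  obtain ⟨b, hbS, hspan, hli⟩ := exists_linearIndependent ℝ S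
  have hfin : b.Finite := hli.setFinite
  haveI := hfin.fintype
  have hcard : Module.finrank ℝ (Submodule.span ℝ S) ≤ Fintype.card b := by
    rw [← hspan, finrank_span_set_eq_card hli]
    simp [Set.toFinset_card]
  obtain ⟨emb⟩ := Function.Embedding.nonempty_of_card_le
    (show Fintype.card (Fin N) ≤ Fintype.card b by
      simpa using hN.trans hcard)
  exact ⟨fun j => (emb j : E), fun j => hbS (emb j).2, hli.comp emb emb.injective⟩

/-- Let `ψ` be smooth on `U × V`, analytic in the second variable about
`p ∈ V` with Taylor coefficient functions `c_s`. If `ψ` has finite rank `k`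
(every sample matrix has rank at most `k`, with equality attained), then no
`k + 1` of the `c_s` are linearly independent on `U`: any `k + 1` distinct
coefficient functions admit a nontrivial linear combination vanishing a.e.
on `U`. -/
theorem stmt12 (n k : ℕ) (U V : Set (Fin n → ℝ))
    (hU : IsOpen U) (hUne : U.Nonempty) (hV : IsOpen V) (hVne : V.Nonempty)
    (p : Fin n → ℝ) (hp : p ∈ V)
    (ψ : (Fin n → ℝ) → (Fin n → ℝ) → ℝ)
    (hψ : ContDiffOn ℝ (⊤ : ℕ∞) (fun q : (Fin n → ℝ) × (Fin n → ℝ) => ψ q.1 q.2) (U ×ˢ V))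
    (c : (Fin n → ℕ) → (Fin n → ℝ) → ℝ)
    (htaylor : ∀ x ∈ U, ∀ y ∈ V,
      HasSum (fun s : Fin n → ℕ => c s x * ∏ i, (y i - p i) ^ s i) (ψ x y))
    (hrank_le : ∀ (m : ℕ) (x y : Fin m → (Fin n → ℝ)),
      (∀ i, x i ∈ U) → (∀ j, y j ∈ V) →
      (Matrix.of fun i j : Fin m => ψ (x i) (y j)).rank ≤ k)
    (hrank_eq : ∃ x y : Fin k → (Fin n → ℝ), (∀ i, x i ∈ U) ∧ (∀ j, y j ∈ V) ∧
      (Matrix.of fun i j : Fin k => ψ (x i) (y j)).rank = k) :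
    ∀ s : Fin (k + 1) → (Fin n → ℕ), Function.Injective s →
      ∃ α : Fin (k + 1) → ℝ, α ≠ 0 ∧
        ∀ᵐ x ∂(volume : Measure (Fin n → ℝ)),
          x ∈ U → ∑ i, α i * c (s i) x = 0 := by
  classical
  intro s hs
  obtain ⟨r, hr0, hrV⟩ : ∃ r : ℝ, 0 < r ∧ ∀ y : Fin n → ℝ, (∀ i, |y i - p i| < r) → y ∈ V := by
    obtain ⟨r, hr0, hball⟩ := Metric.isOpen_iff.mp hV p hp
    refine ⟨r, hr0, fun y hy => hball ?_⟩
    rw [Metric.mem_ball, dist_pi_lt_iff hr0]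
    intro i; rw [Real.dist_eq]; exact hy i
  set S : Set (Fin (k+1) → ℝ) := {w | ∃ x ∈ U, w = fun i => c (s i) x} with hS
  by_cases hT : Submodule.span ℝ S = ⊤
  · exfalso
    have hfrk : k + 1 ≤ Module.finrank ℝ (Submodule.span ℝ S) := by
      rw [hT, finrank_top]
      simp [Module.finrank_pi]
    obtain ⟨g, hgS, hgli⟩ := exists_mem_indep S hfrk
    choose X hXU hXw using hgS
    set SY : Set (Fin (k+1) → ℝ) := {v | ∃ y ∈ V, v = fun j => ψ (X j) y} with hSY
    set W := Submodule.span ℝ SY with hW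
    have hWk : Module.finrank ℝ W ≤ k := by
      by_contra hgt
      push_neg at hgt
      obtain ⟨gy, hgyS, hgyli⟩ := exists_mem_indep SY
        (show k + 1 ≤ Module.finrank ℝ W by omega)
      choose Y hYV hYw using hgyS
      have hrk := hrank_le (k+1) X Y hXU hYV
      have hfun : (Matrix.of fun i j : Fin (k+1) => ψ (X i) (Y j))ᵀ = gy := by
        funext j i
        rw [hYw j]
        rfl
      have hrk2 : (Matrix.of fun i j : Fin (k+1) => ψ (X i) (Y j)).rank = k + 1 := by
        rw [Matrix.rank_eq_finrank_span_cols]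
        change Module.finrank ℝ (Submodule.span ℝ
          (Set.range (Matrix.of fun i j : Fin (k+1) => ψ (X i) (Y j))ᵀ)) = k + 1
        rw [hfun, finrank_span_eq_card hgyli,
          Fintype.card_fin]
      omega
    have hrowW : ∀ st : Fin n → ℕ, (fun j => c st (X j)) ∈ W := by
      intro st
      by_contra hnm
      obtain ⟨f, hf0, hfker⟩ := Submodule.exists_dual_map_eq_bot_of_notMem hnm inferInstance
      have hfW : ∀ w ∈ W, f w = 0 := by
        intro w hw
        have hmem := Submodule.mem_map_of_mem (f := f) hw
        rw [hfker] at hmem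
        simpa using hmem
      set A : (Fin n → ℕ) → ℝ :=
        fun st' => ∑ j, c st' (X j) * f (fun j' => if j = j' then 1 else 0) with hA
      have hA0 : A = 0 := by
        apply mv_coeff_zero n A r hr0
        intro z hz
        set y : Fin n → ℝ := fun i => p i + z i with hy
        have hyV : y ∈ V := hrV y (by intro i; simpa [hy] using hz i)
        have hsum : HasSum (fun st' : Fin n → ℕ => A st' * ∏ i, z i ^ st' i)
            (∑ j, ψ (X j) y * f (fun j' => if j = j' then 1 else 0)) := by
          have h1 : ∀ j ∈ Finset.univ, HasSum (fun st' : Fin n → ℕ =>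
              (c st' (X j) * ∏ i, (y i - p i) ^ st' i) * f (fun j' => if j = j' then 1 else 0))
              (ψ (X j) y * f (fun j' => if j = j' then 1 else 0)) :=
            fun j _ => (htaylor (X j) (hXU j) y hyV).mul_right _
          have h2 := hasSum_sum h1
          have heq : (fun st' : Fin n → ℕ => ∑ j,
              (c st' (X j) * ∏ i, (y i - p i) ^ st' i) * f (fun j' => if j = j' then 1 else 0))
              = fun st' : Fin n → ℕ => A st' * ∏ i, z i ^ st' i := by
            funext st'
            rw [hA, Finset.sum_mul]
            refine Finset.sum_congr rfl (fun j _ => ?_)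
            have hyz : ∀ i, y i - p i = z i := fun i => by simp [hy]
            simp only [hyz]
            ring
          rw [heq] at h2
          exact h2
        have hzero : (∑ j, ψ (X j) y * f (fun j' => if j = j' then 1 else 0)) = 0 := by
          have hv : (fun j => ψ (X j) y) ∈ W := Submodule.subset_span ⟨y, hyV, rfl⟩
          have hfv := hfW _ hv
          rw [LinearMap.pi_apply_eq_sum_univ] at hfv
          simpa [smul_eq_mul] using hfv
        rw [hzero] at hsum
        exact hsum
      apply hf0
      rw [LinearMap.pi_apply_eq_sum_univ]
      have hAst := congrFun hA0 st
      rw [hA] at hAst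
      simpa [smul_eq_mul] using hAst
    -- final contradiction
    have hfunX : (Matrix.of fun i j : Fin (k+1) => c (s i) (X j))ᵀ = g := by
      funext j i
      rw [hXw j]
      rfl
    have hM : (Matrix.of fun i j : Fin (k+1) => c (s i) (X j)).rank = k + 1 := by
      rw [Matrix.rank_eq_finrank_span_cols]
      change Module.finrank ℝ (Submodule.span ℝ
        (Set.range (Matrix.of fun i j : Fin (k+1) => c (s i) (X j))ᵀ)) = k + 1
      rw [hfunX, finrank_span_eq_card hgli,
        Fintype.card_fin]
    have hMT : (Matrix.of fun i j : Fin (k+1) => c (s i) (X j))ᵀ.rank = k + 1 := by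
      rw [Matrix.rank_transpose]; exact hM
    have hrows : Module.finrank ℝ (Submodule.span ℝ
        (Set.range (Matrix.of fun i j : Fin (k+1) => c (s i) (X j)))) = k + 1 := by
      have h9 := Matrix.rank_eq_finrank_span_cols
        (Matrix.of fun i j : Fin (k+1) => c (s i) (X j))ᵀ
      change _ = Module.finrank ℝ (Submodule.span ℝ
        (Set.range (Matrix.of fun i j : Fin (k+1) => c (s i) (X j)))) at h9
      rw [← h9]
      exact hMT
    have hle : Submodule.span ℝ
        (Set.range (Matrix.of fun i j : Fin (k+1) => c (s i) (X j))) ≤ W := by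
      rw [Submodule.span_le]
      rintro w ⟨i, rfl⟩
      exact hrowW (s i)
    have := Submodule.finrank_mono hle
    omega
  · obtain ⟨φ, hφne, hφ⟩ := Submodule.exists_dual_map_eq_bot_of_lt_top
      (lt_top_iff_ne_top.mpr hT) inferInstance
    refine ⟨fun i => φ (fun j => if i = j then 1 else 0), ?_, ?_⟩
    · intro h0
      apply hφne
      apply LinearMap.ext; intro w
      rw [LinearMap.pi_apply_eq_sum_univ]
      have h1 : ∀ i, φ (fun j => if i = j then (1:ℝ) else 0) = 0 := fun i => congrFun h0 i
      simp [h1]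
    · refine Filter.Eventually.of_forall (fun x hx => ?_)
      have hw : (fun i => c (s i) x) ∈ Submodule.span ℝ S :=
        Submodule.subset_span ⟨x, hx, rfl⟩
      have h0 : φ (fun i => c (s i) x) = 0 := by
        have hmem := Submodule.mem_map_of_mem (f := φ) hw
        rw [hφ] at hmem
        simpa using hmem
      rw [LinearMap.pi_apply_eq_sum_univ] at h0
      simpa [smul_eq_mul, mul_comm] using h0
end

section
/- For the Euclidean map η(x,y) = x − y in ℝⁿ, if k > (n+1)(n+2)/2, then for any points x_1,...,x_k ∈ ℝⁿ the linear system ∑_{i=1}^k f_i (x_j − x_i)(x_j − x_i)^T = C_j (j = 1,...,k), in unknowns f ∈ ℝ^k, does not have a unique solution: the associated linear map ℝ^k → (Sym_n)^k given by f ↦ (∑_i f_i (x_j − x_i)(x_j − x_i)^T)_j has nontrivial kernel. -/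
/-!
Expanding `(y - xᵢ)(y - xᵢ)ᵀ = y yᵀ - y xᵢᵀ - xᵢ yᵀ + xᵢ xᵢᵀ` shows that every row of the
system vanishes as soon as `f` annihilates the moments `∑ fᵢ`, `∑ fᵢ xᵢ` and `∑ fᵢ xᵢ xᵢᵀ`.
After homogenising `xᵢ` to `(1, xᵢ) ∈ ℝⁿ⁺¹` these are the `(n+1)(n+2)/2` entries of the
symmetric matrix `∑ fᵢ (1, xᵢ)(1, xᵢ)ᵀ`, i.e. fewer linear conditions than the `k` unknowns.
-/

open Finset Matrix

theorem Matrix.exists_mulVec_eq_zero_of_card_lt {K m n : Type*} [Field K] [Fintype m]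
    [Fintype n] (A : Matrix m n K) (h : Fintype.card m < Fintype.card n) :
    ∃ v ≠ 0, A *ᵥ v = 0 := by
  have hlt : Module.finrank K (m → K) < Module.finrank K (n → K) := by simpa using h
  obtain ⟨v, hv, hv0⟩ := Submodule.exists_mem_ne_zero_of_ne_bot
    (LinearMap.ker_ne_bot_of_finrank_lt (f := A.mulVecLin) hlt)
  exact ⟨v, hv0, hv⟩

theorem exists_ne_zero_forall_sum_mul_mul_eq_zero {K ι α : Type*} [Field K] [Fintype ι]
    [Fintype α] (v : ι → α → K) (h : (Fintype.card α + 1).choose 2 < Fintype.card ι) :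
    ∃ f : ι → K, f ≠ 0 ∧ ∀ a b, ∑ i, f i * (v i a * v i b) = 0 := by
  let A : Matrix (Sym2 α) ι K := fun s i =>
    Sym2.lift ⟨fun a b => v i a * v i b, fun a b => mul_comm _ _⟩ s
  obtain ⟨f, hf, hAf⟩ := A.exists_mulVec_eq_zero_of_card_lt (by rwa [Sym2.card])
  refine ⟨f, hf, fun a b => ?_⟩
  simpa [A, mulVec, dotProduct, mul_comm] using congrFun hAf s(a, b)

theorem sum_mul_sub_mul_sub_eq_zero {R ι α : Type*} [CommRing R] [Fintype ι] {f : ι → R}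
    {x : ι → α → R} (h₀ : ∑ i, f i = 0) (h₁ : ∀ a, ∑ i, f i * x i a = 0)
    (h₂ : ∀ a b, ∑ i, f i * (x i a * x i b) = 0) (y : α → R) (a b : α) :
    ∑ i, f i * ((y a - x i a) * (y b - x i b)) = 0 := by
  have expand : ∀ i, f i * ((y a - x i a) * (y b - x i b)) =
      y a * y b * f i - y a * (f i * x i b) - y b * (f i * x i a) + f i * (x i a * x i b) :=
    fun i => by ring
  simp only [expand, sum_add_distrib, sum_sub_distrib, ← mul_sum, h₀, h₁, h₂]
  ring

/-- For `η(x,y) = x − y` in ℝⁿ, if `k > (n+1)(n+2)/2` then for any points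
`x 1, ..., x k ∈ ℝⁿ` the linear map
`f ↦ (∑ i, f i • (x j − x i)(x j − x i)ᵀ)_j` has nontrivial kernel, so the
system `∑ i, f i (x j − x i)(x j − x i)ᵀ = C j` never has a unique solution. -/
theorem stmt18 (n k : ℕ) (hk : k > (n + 1) * (n + 2) / 2)
    (x : Fin k → Fin n → ℝ) :
    ∃ f : Fin k → ℝ, f ≠ 0 ∧ ∀ j : Fin k,
      ∑ i, f i • (Matrix.of fun l m : Fin n =>
        (x j l - x i l) * (x j m - x i m)) = (0 : Matrix (Fin n) (Fin n) ℝ) := by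
  let v : Fin k → Option (Fin n) → ℝ := fun i => Option.elim' 1 (x i)
  have hcard : (Fintype.card (Option (Fin n)) + 1).choose 2 < Fintype.card (Fin k) := by
    rw [Fintype.card_option, Fintype.card_fin, Fintype.card_fin, Nat.choose_two_right]
    simpa [mul_comm] using hk
  obtain ⟨f, hf, hv⟩ := exists_ne_zero_forall_sum_mul_mul_eq_zero v hcard
  refine ⟨f, hf, fun j => ?_⟩
  ext l m
  simpa [Matrix.sum_apply] using
    sum_mul_sub_mul_sub_eq_zero (x := x) (by simpa [v] using hv none none)
      (fun a => by simpa [v] using hv (some a) none)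
      (fun a b => hv (some a) (some b)) (x j) l m
end
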